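/- Let G be the dodecahedral graph, i.e. the generalized Petersen graph GP(10,2) with vertex set {a_i, b_i : i ∈ ℤ/10} and edges a_i ~ a_{i+1}, a_i ~ b_i, b_i ~ b_{i+2}, and let H be the Desargues graph, i.e. the generalized Petersen graph GP(10,3) with vertex set {a_i, b_i : i ∈ ℤ/10} and edges a_i ~ a_{i+1}, a_i ~ b_i, b_i ~ b_{i+3}. Then: (i) G and H are not isomorphic; (ii) with constant initial colorings, for every iteration t the GD-WL test with the shortest-path distances SPD_G and SPD_H does NOT distinguish G and H; and (iii) there exist surjections from the vertices of G and of H onto finite sets, with the induced coarse graphs, such that with constant initial colorings the GD-WL test with the resulting level-1 HDSE encodings (K = 1) DOES distinguish G and H at some iteration. Consequently, GD-WL with HDSE is strictly more expressive than GD-WL with shortest-path distance. -/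

import Mathlib

/-!
The Desargues graph `GP(10,3)` is bipartite (colour `a_i` by the parity of `i` and `b_i` by the
opposite parity), while the dodecahedral graph `GP(10,2)` contains the pentagon `b₀b₂b₄b₆b₈`, so
the two graphs are not isomorphic.

From every vertex of either graph there are `1, 3, 6, 6, 3, 1` vertices at distance `0, …, 5`.
Hence GD-WL with shortest-path distances gives all vertices one and the same colour in every round.

Coarsen both graphs by that parity map onto `Bool`. An edge then has HDSE encoding `(1, 0)` exactly
when it is monochromatic: the pentagon edge `b₀b₂` is, no edge of the Desargues graph is, so a
single GD-WL round separates the graphs.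
-/

universe u

/-- The coarse graph on `V'` induced by a graph `G` on `V` and a map `φ : V → V'`. -/
def coarseGraph {V V' : Type*} (G : SimpleGraph V) (φ : V → V') : SimpleGraph V' where
  Adj a b := a ≠ b ∧ ∃ u v : V, φ u = a ∧ φ v = b ∧ G.Adj u v
  symm := by
    constructor
    rintro a b ⟨hab, u, v, hu, hv, huv⟩
    exact ⟨hab.symm, v, u, hv, hu, huv.symm⟩
  loopless := ⟨fun a h => h.1 rfl⟩

/-- The type of iteration-`t` GD-WL colors, starting from colors in `C` and distances in `A`. -/
def WLColor (A C : Type u) : ℕ → Type u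
  | 0 => C
  | (t + 1) => Multiset (A × WLColor A C t)

/-- The GD-WL coloring of a finite vertex set `V` with distance function `d : V → V → A` and
initial coloring `χ⁰ : V → C`: `χ^{t+1}(v) = {{(d v u, χ^t u) : u ∈ V}}` (a multiset). -/
def gdwl {V : Type*} {A C : Type u} [Fintype V]
    (d : V → V → A) (χ0 : V → C) : ∀ t : ℕ, V → WLColor A C t
  | 0 => χ0
  | (t + 1) => fun v =>
      (Finset.univ.val.map (fun u : V => (d v u, gdwl d χ0 t u)) : Multiset (A × WLColor A C t))

/-- The generalized Petersen graph `GP(10,k)` on vertices `Sum.inl i = a_i`, `Sum.inr i = b_i`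
(`i ∈ ℤ/10`), with edges `a_i ~ a_{i+1}`, `a_i ~ b_i`, `b_i ~ b_{i+k}`. -/
def genPetersen (k : ZMod 10) : SimpleGraph (ZMod 10 ⊕ ZMod 10) :=
  SimpleGraph.fromRel (fun x y =>
    (∃ i : ZMod 10, x = Sum.inl i ∧ y = Sum.inl (i + 1)) ∨
    (∃ i : ZMod 10, x = Sum.inl i ∧ y = Sum.inr i) ∨
    (∃ i : ZMod 10, x = Sum.inr i ∧ y = Sum.inr (i + k)))

instance (k : ZMod 10) : DecidableRel (genPetersen k).Adj := fun _ _ =>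
  decidable_of_iff _ (SimpleGraph.fromRel_adj _ _ _).symm

namespace SimpleGraph

variable {V V' : Type*} {G : SimpleGraph V}

lemma le_add_length_of_adj_le_succ {f : V → ℕ} (hf : ∀ x y, G.Adj x y → f y ≤ f x + 1)
    {x y : V} (p : G.Walk x y) : f y ≤ f x + p.length := by
  induction p with
  | nil => simp
  | cons h _ ih =>
    have := hf _ _ h
    rw [Walk.length_cons]
    omega

lemma exists_walk_length_eq_of_exists_adj_pred {v : V} {f : V → ℕ} (hv : f v = 0)
    (hf : ∀ u, u ≠ v → ∃ w, G.Adj u w ∧ f w + 1 = f u) (u : V) :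
    ∃ p : G.Walk v u, p.length = f u := by
  induction hn : f u generalizing u with
  | zero =>
    by_cases huv : u = v
    · subst huv
      exact ⟨Walk.nil, rfl⟩
    · obtain ⟨w, -, hw⟩ := hf u huv
      omega
  | succ n ih =>
    obtain ⟨w, huw, hw⟩ := hf u (by rintro rfl; omega)
    obtain ⟨p, hp⟩ := ih w (by omega)
    exact ⟨p.concat huw.symm, by rw [Walk.length_concat, hp]⟩

lemma dist_eq_of_bfs_certificate {f : V → V → ℕ} (hv : ∀ v, f v v = 0)
    (hle : ∀ v x y, G.Adj x y → f v y ≤ f v x + 1)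
    (hdesc : ∀ v u, u ≠ v → ∃ w, G.Adj u w ∧ f v w + 1 = f v u) :
    G.dist = f := by
  ext v u
  obtain ⟨p, hp⟩ := exists_walk_length_eq_of_exists_adj_pred (hv v) (hdesc v) u
  obtain ⟨q, hq⟩ := Reachable.exists_walk_length_eq_dist ⟨p⟩
  have hupper := hp ▸ dist_le p
  have hlower := le_add_length_of_adj_le_succ (hle v) q
  have := hv v
  omega

lemma Adj.dist_coarseGraph_eq_zero_iff {φ : V → V'} {u v : V} (h : G.Adj u v) :
    (coarseGraph G φ).dist (φ u) (φ v) = 0 ↔ φ u = φ v := by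
  rw [dist_eq_zero_iff_eq_or_not_reachable, or_iff_left_iff_imp]
  intro hunreach
  by_contra hne
  exact hunreach (Adj.reachable ⟨hne, u, v, rfl, rfl, h⟩)

/-- The level-1 HDSE encoding `D_{u,v}` for the coarsening `φ`. -/
noncomputable def hdse (G : SimpleGraph V) (φ : V → V') (u v : V) : ℕ × ℕ :=
  (G.dist u v, (coarseGraph G φ).dist (φ u) (φ v))

lemma hdse_eq_one_zero_iff {φ : V → V'} {u v : V} :
    G.hdse φ u v = (1, 0) ↔ G.Adj u v ∧ φ u = φ v := by
  rw [hdse, Prod.mk.injEq, dist_eq_one_iff_adj]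
  exact and_congr_right Adj.dist_coarseGraph_eq_zero_iff

end SimpleGraph

section GDWL

variable {A C : Type u}

def WLColor.uniform (M : Multiset A) (c : C) : ∀ t : ℕ, WLColor A C t
  | 0 => c
  | t + 1 => M.map fun a => (a, WLColor.uniform M c t)

variable {V : Type*} [Fintype V]

lemma gdwl_succ (d : V → V → A) (χ : V → C) (t : ℕ) (v : V) :
    gdwl d χ (t + 1) v = Finset.univ.val.map fun u => (d v u, gdwl d χ t u) :=
  rfl

lemma gdwl_eq_uniform {d : V → V → A} {M : Multiset A}
    (hd : ∀ v, Finset.univ.val.map (d v) = M) (c : C) (t : ℕ) (v : V) :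
    gdwl d (fun _ => c) t v = WLColor.uniform M c t := by
  induction t generalizing v with
  | zero => rfl
  | succ t ih =>
    rw [gdwl_succ, WLColor.uniform, ← hd v, Multiset.map_map]
    exact Multiset.map_congr rfl fun u _ => by rw [ih, hd v]; rfl

lemma map_gdwl_eq_replicate {d : V → V → A} {M : Multiset A}
    (hd : ∀ v, Finset.univ.val.map (d v) = M) (c : C) (t : ℕ) :
    Finset.univ.val.map (gdwl d (fun _ => c) t) =
      Multiset.replicate (Fintype.card V) (WLColor.uniform M c t) := by
  simp only [gdwl_eq_uniform hd, Multiset.map_const', Finset.card_val, Finset.card_univ]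

lemma map_gdwl_one_ne {V₂ : Type*} [Fintype V₂] {d₁ : V → V → A} {d₂ : V₂ → V₂ → A}
    (χ₁ : V → C) (χ₂ : V₂ → C) {a : A} (h₁ : ∃ v u, d₁ v u = a) (h₂ : ∀ v u, d₂ v u ≠ a) :
    Finset.univ.val.map (gdwl d₁ χ₁ 1) ≠ Finset.univ.val.map (gdwl d₂ χ₂ 1) := by
  obtain ⟨v, u, hvu⟩ := h₁
  intro h
  have hv : gdwl d₁ χ₁ 1 v ∈ Finset.univ.val.map (gdwl d₂ χ₂ 1) :=
    h ▸ Multiset.mem_map_of_mem _ (Finset.mem_univ v)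
  obtain ⟨w, -, hw⟩ := Multiset.mem_map.mp hv
  rw [gdwl_succ, gdwl_succ] at hw
  have hu : (a, χ₁ u) ∈ Finset.univ.val.map fun u => (d₂ w u, gdwl d₂ χ₂ 0 u) := by
    rw [hw, ← hvu]
    exact Multiset.mem_map_of_mem (fun u => (d₁ v u, χ₁ u)) (Finset.mem_univ u)
  obtain ⟨u', -, hu'⟩ := Multiset.mem_map.mp hu
  exact h₂ w u' (congrArg Prod.fst hu')

end GDWL

namespace GenPetersen

open SimpleGraph

abbrev Vertex := ZMod 10 ⊕ ZMod 10

/-- The labelling invariant under the rotation `i ↦ i + 1` in which `a_0` sees `a_j` and `b_j` as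
`aa[j]` and `ab[j]`, and `b_0` sees `b_j` as `bb[j]`. Only for palindromic `ab` is it symmetric. -/
def rotationInvariantLabel (aa ab bb : List ℕ) : Vertex → Vertex → ℕ
  | .inl i, .inl j => aa.getD (j - i).val 0
  | .inl i, .inr j => ab.getD (j - i).val 0
  | .inr i, .inl j => ab.getD (j - i).val 0
  | .inr i, .inr j => bb.getD (j - i).val 0

def dodecahedralDist : Vertex → Vertex → ℕ :=
  rotationInvariantLabel [0, 1, 2, 3, 4, 5, 4, 3, 2, 1] [1, 2, 2, 3, 3, 4, 3, 3, 2, 2]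
    [0, 3, 1, 4, 2, 5, 2, 4, 1, 3]

def desarguesDist : Vertex → Vertex → ℕ :=
  rotationInvariantLabel [0, 1, 2, 3, 4, 5, 4, 3, 2, 1] [1, 2, 3, 2, 3, 4, 3, 2, 3, 2]
    [0, 3, 4, 1, 2, 5, 2, 1, 4, 3]

lemma dist_genPetersen_two : (genPetersen 2).dist = dodecahedralDist :=
  dist_eq_of_bfs_certificate (by decide) (by decide) (by decide)

lemma dist_genPetersen_three : (genPetersen 3).dist = desarguesDist :=
  dist_eq_of_bfs_certificate (by decide) (by decide) (by decide)

def distProfile : Multiset ℕ :=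
  {0, 1, 1, 1, 2, 2, 2, 2, 2, 2, 3, 3, 3, 3, 3, 3, 4, 4, 4, 5}

lemma map_dist_genPetersen_two (v : Vertex) :
    Finset.univ.val.map ((genPetersen 2).dist v) = distProfile := by
  rw [dist_genPetersen_two]
  revert v
  decide

lemma map_dist_genPetersen_three (v : Vertex) :
    Finset.univ.val.map ((genPetersen 3).dist v) = distProfile := by
  rw [dist_genPetersen_three]
  revert v
  decide

def parity : Vertex → Bool
  | .inl i => i.val % 2 == 0
  | .inr i => i.val % 2 != 0

lemma parity_surjective : Function.Surjective parity := by decide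

def parityColoring : (genPetersen 3).Coloring Bool := Coloring.mk parity (by decide)

lemma isBipartite_genPetersen_three : (genPetersen 3).IsBipartite := by
  simpa using parityColoring.colorable

lemma not_isBipartite_genPetersen_two : ¬ (genPetersen 2).IsBipartite := by
  let pentagon : (genPetersen 2).Walk (.inr 0) (.inr 0) :=
    .cons (v := .inr 2) (by decide) <| .cons (v := .inr 4) (by decide) <|
      .cons (v := .inr 6) (by decide) <| .cons (v := .inr 8) (by decide) <|
      .cons (by decide) .nil
  rw [IsBipartite, two_colorable_iff_forall_loop_even]
  exact fun h => Nat.not_even_iff_odd.mpr (by decide) (h _ pentagon)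

end GenPetersen

open GenPetersen in
/-- Let `G = GP(10,2)` be the dodecahedral graph and `H = GP(10,3)` the
Desargues graph. Then (i) `G` and `H` are not isomorphic; (ii) with constant initial colorings,
for every iteration `t` the GD-WL test with the shortest-path distances does **not** distinguish
`G` and `H`; (iii) there exist surjections of the vertex sets onto finite sets such that, with
the induced coarse graphs and the resulting level-1 HDSE encodings
`D(u,v) = (dist_G u v, dist_{G¹} (φ u) (φ v))`, the GD-WL test **does** distinguish `G` and `H`
at some iteration. Hence GD-WL with HDSE is strictly more expressive than GD-WL with SPD. -/
theorem hdse_strictly_more_expressive_than_spd :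
    (¬ Nonempty (genPetersen 2 ≃g genPetersen 3)) ∧
    (∀ t : ℕ,
      Finset.univ.val.map
          (gdwl (fun u v => (genPetersen 2).dist u v) (fun _ => ()) t) =
        Finset.univ.val.map
          (gdwl (fun u v => (genPetersen 3).dist u v) (fun _ => ()) t)) ∧
    (∃ (VG' VH' : Type) (_ : Finite VG') (_ : Finite VH')
        (φG : ZMod 10 ⊕ ZMod 10 → VG') (φH : ZMod 10 ⊕ ZMod 10 → VH'),
      Function.Surjective φG ∧ Function.Surjective φH ∧
      ∃ t : ℕ,
        Finset.univ.val.map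
            (gdwl (fun u v =>
              ((genPetersen 2).dist u v,
                (coarseGraph (genPetersen 2) φG).dist (φG u) (φG v)))
              (fun _ => ()) t) ≠
          Finset.univ.val.map
            (gdwl (fun u v =>
              ((genPetersen 3).dist u v,
                (coarseGraph (genPetersen 3) φH).dist (φH u) (φH v)))
              (fun _ => ()) t)) := by
  refine ⟨?_, fun t => ?_, Bool, Bool, inferInstance, inferInstance, parity, parity,
    parity_surjective, parity_surjective, 1, ?_⟩
  · rintro ⟨e⟩
    exact not_isBipartite_genPetersen_two (isBipartite_genPetersen_three.of_hom e.toHom)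
  · rw [map_gdwl_eq_replicate map_dist_genPetersen_two,
      map_gdwl_eq_replicate map_dist_genPetersen_three]
  · refine map_gdwl_one_ne _ _ (a := (1, 0)) ⟨.inr 0, .inr 2, ?_⟩ fun v u h => ?_
    · exact SimpleGraph.hdse_eq_one_zero_iff.mpr ⟨by decide, by decide⟩
    · obtain ⟨hadj, hcolor⟩ := SimpleGraph.hdse_eq_one_zero_iff.mp h
      exact parityColoring.valid hadj hcolor
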